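/- A neutral set of a flow on a compact metric space is isolated if and only if it is Ω-isolated. -/

import Mathlib

open Filter Topology Metric Set

variable {M : Type*} [MetricSpace M]

/-- `φ` is a continuous flow on `M`. -/
def IsFlow (φ : ℝ → M → M) : Prop :=
  Continuous (fun p : ℝ × M => φ p.1 p.2) ∧ (∀ x, φ 0 x = x) ∧
    (∀ s t : ℝ, ∀ x, φ (s + t) x = φ s (φ t x))

/-- The time-reversed flow. -/
def ReverseFlow (φ : ℝ → M → M) : ℝ → M → M := fun t x => φ (-t) x

/-- A compact set `A` is Lyapunov stable for `φ`. -/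
def LyapStable (φ : ℝ → M → M) (A : Set M) : Prop :=
  IsCompact A ∧ ∀ U : Set M, IsOpen U → A ⊆ U →
    ∃ V : Set M, IsOpen V ∧ A ⊆ V ∧ ∀ t : ℝ, 0 ≤ t → φ t '' V ⊆ U

/-- The ω-limit set of `x`: accumulation points of `φ t x` as `t → +∞`. -/
def OmegaSet (φ : ℝ → M → M) (x : M) : Set M :=
  {y | ∃ u : ℕ → ℝ, Tendsto u atTop atTop ∧ Tendsto (fun n => φ (u n) x) atTop (𝓝 y)}

/-- The α-limit set of `x`: accumulation points of `φ t x` as `t → -∞`. -/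
def AlphaSet (φ : ℝ → M → M) (x : M) : Set M :=
  {y | ∃ u : ℕ → ℝ, Tendsto u atTop atBot ∧ Tendsto (fun n => φ (u n) x) atTop (𝓝 y)}

/-- The stable set of `Λ`. -/
def StableSet (φ : ℝ → M → M) (Λ : Set M) : Set M :=
  {x | Tendsto (fun t => infDist (φ t x) Λ) atTop (𝓝 0)}

/-- The unstable set of `Λ`. -/
def UnstableSet (φ : ℝ → M → M) (Λ : Set M) : Set M :=
  {x | Tendsto (fun t => infDist (φ t x) Λ) atBot (𝓝 0)}

/-- `Λ` is invariant under the flow. -/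
def IsInvariantSet (φ : ℝ → M → M) (Λ : Set M) : Prop := ∀ t : ℝ, φ t '' Λ = Λ

/-- `Γ` is a transitive set: compact, invariant, and equal to the ω-limit set of
one of its points. -/
def IsTransitiveSet (φ : ℝ → M → M) (Γ : Set M) : Prop :=
  IsCompact Γ ∧ IsInvariantSet φ Γ ∧ ∃ x ∈ Γ, OmegaSet φ x = Γ

/-- `Λ` is neutral: a compact invariant set which is the intersection of a Lyapunov
stable set for `φ` and a Lyapunov stable set for the reversed flow. -/
def IsNeutralSet (φ : ℝ → M → M) (Λ : Set M) : Prop :=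
  IsCompact Λ ∧ IsInvariantSet φ Λ ∧
    ∃ Λp Λm : Set M, LyapStable φ Λp ∧ LyapStable (ReverseFlow φ) Λm ∧ Λ = Λp ∩ Λm

/-- The nonwandering set of the flow. -/
def NonwanderingSet (φ : ℝ → M → M) : Set M :=
  {p | ∀ W : Set M, IsOpen W → p ∈ W → ∀ T : ℝ, 0 < T → ∃ t > T, (φ t '' W ∩ W).Nonempty}

/-- `Λ` is isolated: the maximal invariant set of some compact neighborhood. -/
def IsIsolatedSet (φ : ℝ → M → M) (Λ : Set M) : Prop :=
  ∃ U : Set M, IsCompact U ∧ Λ ⊆ interior U ∧ (⋂ t : ℝ, φ t '' U) = Λ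

/-- `Λ` is Ω-isolated: `Ω(φ) \ Λ` is closed. -/
def IsOmegaIsolatedSet (φ : ℝ → M → M) (Λ : Set M) : Prop :=
  IsClosed (NonwanderingSet φ \ Λ)

/-!
If `U` isolates `Λ = Λ⁺ ∩ Λ⁻`, pick open `A ⊇ Λ⁺`, `B ⊇ Λ⁻` with `A ∩ B ⊆ U` and, by stability,
open `V⁺ ⊇ Λ⁺`, `V⁻ ⊇ Λ⁻` whose forward images stay in `A` and backward images stay in `B`.
A nonwandering point `p ∈ V⁺ ∩ V⁻` is approximated by points returning to `V⁺ ∩ V⁻` after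
arbitrarily long times, so each `φ s p` is approximated by points that are both forward images of
`V⁺` and backward images of `V⁻`; hence the orbit of `p` stays in `U` and `p ∈ Λ`. Thus `Λ` has a
neighbourhood meeting `Ω` only in `Λ`, which means that `Ω \ Λ` is closed.

Conversely, if `Ω \ Λ` is closed then `Λ` has a compact neighbourhood `N` with `N ∩ Ω ⊆ Λ`. A full
orbit inside `N` has its α- and ω-limit points in `N ∩ Ω ⊆ Λ`, and a point whose α-limit set meets
the Lyapunov stable set `Λ⁺` lies in `Λ⁺` (dually for `Λ⁻`), so the orbit lies in `Λ`.
-/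

theorem exists_isOpen_inter_subset {X : Type*} [TopologicalSpace X] [T2Space X]
    {K L O : Set X} (hK : IsCompact K) (hL : IsCompact L) (hO : IsOpen O) (hKL : K ∩ L ⊆ O) :
    ∃ A B : Set X, IsOpen A ∧ IsOpen B ∧ K ⊆ A ∧ L ⊆ B ∧ A ∩ B ⊆ O := by
  have hdisj : Disjoint (K \ O) L :=
    disjoint_left.mpr fun x hx hxL => hx.2 (hKL ⟨hx.1, hxL⟩)
  obtain ⟨P, Q, hP, hQ, hKP, hLQ, hPQ⟩ :=
    SeparatedNhds.of_isCompact_isCompact (hK.diff hO) hL hdisj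
  refine ⟨P ∪ O, Q, hP.union hO, hQ, fun x hx => ?_, hLQ, ?_⟩
  · by_cases hxO : x ∈ O
    exacts [Or.inr hxO, Or.inl (hKP ⟨hx, hxO⟩)]
  · rintro x ⟨hxP | hxO, hxQ⟩
    exacts [(disjoint_left.mp hPQ hxP hxQ).elim, hxO]

theorem IsClosed.sdiff_of_inter_subset {X : Type*} [TopologicalSpace X] {Ω Λ V : Set X}
    (hΩ : IsClosed Ω) (hV : IsOpen V) (hΛV : Λ ⊆ V) (hΩV : Ω ∩ V ⊆ Λ) : IsClosed (Ω \ Λ) := by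
  have hdiff : Ω \ Λ = Ω \ V :=
    Subset.antisymm (fun x hx => ⟨hx.1, fun hxV => hx.2 (hΩV ⟨hx.1, hxV⟩)⟩)
      (fun x hx => ⟨hx.1, fun hxΛ => hx.2 (hΛV hxΛ)⟩)
  rw [hdiff]
  exact hΩ.sdiff hV

namespace IsFlow

variable {φ : ℝ → M → M}

theorem continuous_apply (hφ : IsFlow φ) (t : ℝ) : Continuous (φ t) :=
  hφ.1.comp (Continuous.prodMk_right t)

theorem apply_add (hφ : IsFlow φ) (s t : ℝ) (x : M) : φ (s + t) x = φ s (φ t x) :=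
  hφ.2.2 s t x

theorem apply_neg_apply (hφ : IsFlow φ) (t : ℝ) (x : M) : φ (-t) (φ t x) = x := by
  rw [← hφ.apply_add, neg_add_cancel, hφ.2.1]

theorem apply_apply_neg (hφ : IsFlow φ) (t : ℝ) (x : M) : φ t (φ (-t) x) = x := by
  simpa using hφ.apply_neg_apply (-t) x

theorem reverse (hφ : IsFlow φ) : IsFlow (ReverseFlow φ) := by
  refine ⟨hφ.1.comp (continuous_neg.prodMap continuous_id), fun x => ?_, fun s t x => ?_⟩
  · simp only [ReverseFlow, neg_zero, hφ.2.1]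
  · simp only [ReverseFlow, neg_add, hφ.apply_add]

theorem mem_iInter_image_iff (hφ : IsFlow φ) {S : Set M} {x : M} :
    x ∈ ⋂ t, φ t '' S ↔ ∀ t, φ t x ∈ S := by
  refine mem_iInter.trans ⟨fun h t => ?_, fun h t => ⟨φ (-t) x, h _, hφ.apply_apply_neg t x⟩⟩
  obtain ⟨y, hy, hyx⟩ := h (-t)
  rwa [← hyx, hφ.apply_apply_neg]

theorem mem_nonwanderingSet_of_tendsto (hφ : IsFlow φ) {x z : M} {u : ℕ → ℝ}
    (hz : Tendsto (fun n => φ (u n) x) atTop (𝓝 z))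
    (hu : ∀ T : ℝ, ∀ m : ℕ, ∃ k ≥ m, ∃ l ≥ m, T < u k - u l) :
    z ∈ NonwanderingSet φ := by
  intro W hW hzW T _
  obtain ⟨m, hm⟩ := (hz.eventually (hW.mem_nhds hzW)).exists_forall_of_atTop
  obtain ⟨k, hk, l, hl, hkl⟩ := hu T m
  refine ⟨u k - u l, hkl, φ (u k) x, ⟨φ (u l) x, hm l hl, ?_⟩, hm k hk⟩
  rw [← hφ.apply_add, sub_add_cancel]

theorem omegaSet_subset_nonwanderingSet (hφ : IsFlow φ) (x : M) :
    OmegaSet φ x ⊆ NonwanderingSet φ := by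
  rintro z ⟨u, hu, hz⟩
  refine hφ.mem_nonwanderingSet_of_tendsto hz fun T m => ?_
  obtain ⟨k, hkm, hk⟩ := ((eventually_ge_atTop m).and (hu.eventually_gt_atTop (u m + T))).exists
  exact ⟨k, hkm, m, le_rfl, by linarith⟩

theorem alphaSet_subset_nonwanderingSet (hφ : IsFlow φ) (x : M) :
    AlphaSet φ x ⊆ NonwanderingSet φ := by
  rintro z ⟨u, hu, hz⟩
  refine hφ.mem_nonwanderingSet_of_tendsto hz fun T m => ?_
  obtain ⟨l, hlm, hl⟩ := ((eventually_ge_atTop m).and (hu.eventually_lt_atBot (u m - T))).exists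
  exact ⟨m, le_rfl, l, hlm, by linarith⟩

end IsFlow

theorem omegaSet_subset_alphaSet_reverseFlow (φ : ℝ → M → M) (x : M) :
    OmegaSet φ x ⊆ AlphaSet (ReverseFlow φ) x := by
  rintro z ⟨u, hu, hz⟩
  exact ⟨fun n => -u n, tendsto_neg_atTop_atBot.comp hu, by simpa [ReverseFlow] using hz⟩

theorem omegaSet_subset_of_forall_mem {φ : ℝ → M → M} {N : Set M} (hN : IsClosed N) {x : M}
    (hx : ∀ t, φ t x ∈ N) : OmegaSet φ x ⊆ N :=
  fun _ ⟨_, _, hz⟩ => hN.mem_of_tendsto hz (Eventually.of_forall fun _ => hx _)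

theorem alphaSet_subset_of_forall_mem {φ : ℝ → M → M} {N : Set M} (hN : IsClosed N) {x : M}
    (hx : ∀ t, φ t x ∈ N) : AlphaSet φ x ⊆ N :=
  fun _ ⟨_, _, hz⟩ => hN.mem_of_tendsto hz (Eventually.of_forall fun _ => hx _)

theorem omegaSet_nonempty [CompactSpace M] (φ : ℝ → M → M) (x : M) :
    (OmegaSet φ x).Nonempty := by
  obtain ⟨z, -, ψ, hψ, hz⟩ :=
    isCompact_univ.tendsto_subseq (x := fun n : ℕ => φ n x) fun _ => mem_univ _
  exact ⟨z, fun k => ψ k, tendsto_natCast_atTop_atTop.comp hψ.tendsto_atTop, hz⟩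

theorem alphaSet_nonempty [CompactSpace M] (φ : ℝ → M → M) (x : M) :
    (AlphaSet φ x).Nonempty := by
  obtain ⟨z, -, ψ, hψ, hz⟩ :=
    isCompact_univ.tendsto_subseq (x := fun n : ℕ => φ (-n) x) fun _ => mem_univ _
  exact ⟨z, fun k => -(ψ k : ℝ),
    tendsto_neg_atTop_atBot.comp (tendsto_natCast_atTop_atTop.comp hψ.tendsto_atTop), hz⟩

theorem isClosed_nonwanderingSet (φ : ℝ → M → M) : IsClosed (NonwanderingSet φ) := by
  refine isOpen_compl_iff.mp (isOpen_iff_forall_mem_open.mpr fun p hp => ?_)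
  obtain ⟨W, hW, hpW, T, hT, hW'⟩ : ∃ W, IsOpen W ∧ p ∈ W ∧
      ∃ T > 0, ∀ t > T, ¬(φ t '' W ∩ W).Nonempty := by
    simpa [NonwanderingSet] using hp
  refine ⟨W, fun q hq hqΩ => ?_, hW, hpW⟩
  obtain ⟨t, ht, hret⟩ := hqΩ W hW hq T hT
  exact hW' t ht hret

/-- A return from `Vp ∩ Vm` to itself taking longer than `|s|` is, at time `s`, both a forward
image of `Vp` and a backward image of `Vm`, hence in `A ∩ B`. -/
theorem IsFlow.apply_mem_of_mem_nonwanderingSet {φ : ℝ → M → M} (hφ : IsFlow φ)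
    {A B C Vp Vm : Set M} (hVp : IsOpen Vp) (hVm : IsOpen Vm)
    (hA : ∀ t : ℝ, 0 ≤ t → φ t '' Vp ⊆ A) (hB : ∀ t : ℝ, 0 ≤ t → ReverseFlow φ t '' Vm ⊆ B)
    (hC : IsClosed C) (hABC : A ∩ B ⊆ C) {p : M} (hp : p ∈ NonwanderingSet φ)
    (hpVp : p ∈ Vp) (hpVm : p ∈ Vm) (s : ℝ) : φ s p ∈ C := by
  by_contra hs
  obtain ⟨t, hts, _, ⟨w, hw, rfl⟩, hwt⟩ :=
    hp (Vp ∩ Vm ∩ φ s ⁻¹' Cᶜ) ((hVp.inter hVm).inter (hC.isOpen_compl.preimage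
      (hφ.continuous_apply s))) ⟨⟨hpVp, hpVm⟩, hs⟩ (|s| + 1) (by positivity)
  have hst : |s| < t := by linarith
  rcases le_or_gt 0 s with hs0 | hs0
  · have hwB : φ s w ∈ B := by
      have : ReverseFlow φ (t - s) (φ t w) = φ s w := by
        rw [ReverseFlow, ← hφ.apply_add, neg_sub, sub_add_cancel]
      exact this ▸ hB (t - s) (by linarith [le_abs_self s]) ⟨_, hwt.1.2, rfl⟩
    exact hw.2 (hABC ⟨hA s hs0 ⟨w, hw.1.1, rfl⟩, hwB⟩)
  · have hwA : φ s (φ t w) ∈ A := by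
      rw [← hφ.apply_add]
      exact hA (s + t) (by linarith [neg_abs_le s]) ⟨w, hw.1.1, rfl⟩
    have hwB : φ s (φ t w) ∈ B := by
      simpa [ReverseFlow] using hB (-s) (neg_nonneg.mpr hs0.le) ⟨_, hwt.1.2, rfl⟩
    exact hwt.2 (hABC ⟨hwA, hwB⟩)

theorem LyapStable.mem_of_mem_alphaSet {φ : ℝ → M → M} {A : Set M} (hA : LyapStable φ A)
    (hφ : IsFlow φ) {x z : M} (hz : z ∈ AlphaSet φ x) (hzA : z ∈ A) : x ∈ A := by
  by_contra hx
  obtain ⟨V, hV, hAV, hVx⟩ :=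
    hA.2 {x}ᶜ isOpen_compl_singleton fun y hy hyx => hx (hyx ▸ hy)
  obtain ⟨u, hu, hzu⟩ := hz
  obtain ⟨n, hnV, hn⟩ :=
    ((hzu.eventually (hV.mem_nhds (hAV hzA))).and (hu.eventually_le_atBot 0)).exists
  exact hVx (-u n) (neg_nonneg.mpr hn) ⟨_, hnV, hφ.apply_neg_apply _ _⟩ rfl

theorem IsNeutralSet.isOmegaIsolatedSet_of_isIsolatedSet {φ : ℝ → M → M} (hφ : IsFlow φ)
    {Λ : Set M} (hΛ : IsNeutralSet φ Λ) (hiso : IsIsolatedSet φ Λ) :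
    IsOmegaIsolatedSet φ Λ := by
  obtain ⟨-, -, Λp, Λm, hΛp, hΛm, rfl⟩ := hΛ
  obtain ⟨U, hU, hΛU, hUΛ⟩ := hiso
  obtain ⟨A, B, hA, hB, hΛpA, hΛmB, hABU⟩ :=
    exists_isOpen_inter_subset hΛp.1 hΛm.1 isOpen_interior hΛU
  obtain ⟨Vp, hVp, hΛpVp, hVpA⟩ := hΛp.2 A hA hΛpA
  obtain ⟨Vm, hVm, hΛmVm, hVmB⟩ := hΛm.2 B hB hΛmB
  refine (isClosed_nonwanderingSet φ).sdiff_of_inter_subset (hVp.inter hVm)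
    (inter_subset_inter hΛpVp hΛmVm) fun p ⟨hp, hpVp, hpVm⟩ => ?_
  rw [← hUΛ, hφ.mem_iInter_image_iff]
  exact hφ.apply_mem_of_mem_nonwanderingSet hVp hVm hVpA hVmB hU.isClosed
    (hABU.trans interior_subset) hp hpVp hpVm

theorem IsNeutralSet.mem_of_forall_apply_mem [CompactSpace M] {φ : ℝ → M → M}
    (hφ : IsFlow φ) {Λ N : Set M} (hΛ : IsNeutralSet φ Λ) (hN : IsClosed N)
    (hNΛ : N ∩ NonwanderingSet φ ⊆ Λ) {x : M} (hx : ∀ t, φ t x ∈ N) : x ∈ Λ := by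
  obtain ⟨-, -, Λp, Λm, hΛp, hΛm, rfl⟩ := hΛ
  obtain ⟨zα, hzα⟩ := alphaSet_nonempty φ x
  obtain ⟨zω, hzω⟩ := omegaSet_nonempty φ x
  have hzαΛ : zα ∈ Λp ∩ Λm :=
    hNΛ ⟨alphaSet_subset_of_forall_mem hN hx hzα, hφ.alphaSet_subset_nonwanderingSet x hzα⟩
  have hzωΛ : zω ∈ Λp ∩ Λm :=
    hNΛ ⟨omegaSet_subset_of_forall_mem hN hx hzω, hφ.omegaSet_subset_nonwanderingSet x hzω⟩
  exact ⟨hΛp.mem_of_mem_alphaSet hφ hzα hzαΛ.1, hΛm.mem_of_mem_alphaSet hφ.reverse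
    (omegaSet_subset_alphaSet_reverseFlow φ x hzω) hzωΛ.2⟩

theorem IsNeutralSet.isIsolatedSet_of_isOmegaIsolatedSet [CompactSpace M] {φ : ℝ → M → M}
    (hφ : IsFlow φ) {Λ : Set M} (hΛ : IsNeutralSet φ Λ) (hΩ : IsOmegaIsolatedSet φ Λ) :
    IsIsolatedSet φ Λ := by
  obtain ⟨N, hN, hΛN, hNΩ⟩ := exists_compact_between hΛ.1 hΩ.isOpen_compl
    fun x hx hxΩ => hxΩ.2 hx
  refine ⟨N, hN, hΛN, Subset.antisymm (fun x hx => ?_) fun x hx => ?_⟩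
  · refine hΛ.mem_of_forall_apply_mem hφ hN.isClosed (fun y hy => ?_)
      (hφ.mem_iInter_image_iff.mp hx)
    by_contra hyΛ
    exact hNΩ hy.1 ⟨hy.2, hyΛ⟩
  · exact hφ.mem_iInter_image_iff.mpr fun t =>
      interior_subset (hΛN ((hΛ.2.1 t).symm ▸ mem_image_of_mem (φ t) hx))

theorem neutral_isolated_iff_omega_isolated [CompactSpace M] (φ : ℝ → M → M)
    (hφ : IsFlow φ) (Λ : Set M) (hΛ : IsNeutralSet φ Λ) :
    IsIsolatedSet φ Λ ↔ IsOmegaIsolatedSet φ Λ :=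
  ⟨hΛ.isOmegaIsolatedSet_of_isIsolatedSet hφ, hΛ.isIsolatedSet_of_isOmegaIsolatedSet hφ⟩
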